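/- Let C ⊆ ℝⁿ be a pointed n-dimensional closed convex cone, ω ⊆ Ω = S^{n-1} ∩ int C° a nonempty compact set, K, L ∈ 𝒦(C,ω), p ∈ (0,1], and t ∈ [0,1]. Then log γⁿ(C ∩ ⋂_{u∈ω} {y : ⟨y,u⟩ ≤ −((1−t)(−h_K(u))^p + t(−h_L(u))^p)^{1/p}}) ≥ (1−t) log γⁿ(K) + t log γⁿ(L); that is, the Gaussian measure of the Wulff shape of the p-mean ((1−t)ĥ_K^p + tĥ_L^p)^{1/p} is at least γⁿ(K)^{1−t} γⁿ(L)^t. -/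

import Mathlib

open MeasureTheory Metric Set Filter
open scoped RealInnerProductSpace Pointwise Topology ENNReal

noncomputable section

/-- `ℝⁿ` as Euclidean space. -/
abbrev En (n : ℕ) := EuclideanSpace ℝ (Fin n)

/-- The standard Gaussian measure of a set `A ⊆ ℝⁿ`:
`γⁿ(A) = (2π)^{-n/2} ∫_A e^{-‖x‖²/2} dx`. -/
def gaussianMeasure (n : ℕ) (A : Set (En n)) : ℝ :=
  (2 * Real.pi) ^ (-(n : ℝ) / 2) * ∫ x in A, Real.exp (-‖x‖ ^ 2 / 2)

/-- A pointed (no lines), `n`-dimensional (nonempty interior), closed convex cone. -/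
def IsPointedCone {n : ℕ} (C : Set (En n)) : Prop :=
  IsClosed C ∧ Convex ℝ C ∧ (∀ x ∈ C, ∀ c : ℝ, 0 ≤ c → c • x ∈ C) ∧
    (interior C).Nonempty ∧ ∀ x ∈ C, -x ∈ C → x = 0

/-- The polar cone `C° = {x : ⟨x,y⟩ ≤ 0 ∀ y ∈ C}`. -/
def polarCone {n : ℕ} (C : Set (En n)) : Set (En n) := {x | ∀ y ∈ C, ⟪x, y⟫ ≤ 0}

/-- `Ω = S^{n-1} ∩ int C°`. -/
def OmegaSet {n : ℕ} (C : Set (En n)) : Set (En n) :=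
  sphere (0 : En n) 1 ∩ interior (polarCone C)

/-- A pseudo-cone: nonempty closed convex set not containing the origin with `λK ⊆ K` for `λ ≥ 1`. -/
def IsPseudoCone {n : ℕ} (K : Set (En n)) : Prop :=
  K.Nonempty ∧ IsClosed K ∧ Convex ℝ K ∧ (0 : En n) ∉ K ∧
    ∀ c : ℝ, 1 ≤ c → c • K ⊆ K

/-- The recession cone `rec K = {z : K + z ⊆ K}`. -/
def recessionCone {n : ℕ} (K : Set (En n)) : Set (En n) := {z | ∀ x ∈ K, x + z ∈ K}

/-- A `C`-pseudo-cone: a pseudo-cone whose recession cone is `C`. -/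
def IsCPseudoCone {n : ℕ} (C K : Set (En n)) : Prop :=
  IsPseudoCone K ∧ recessionCone K = C

/-- The support function `h_K(u) = sup {⟨x,u⟫ : x ∈ K}`. -/
def suppFn {n : ℕ} (K : Set (En n)) (u : En n) : ℝ := sSup ((fun x => ⟪x, u⟫) '' K)

/-- The Wulff shape `[f] = C ∩ ⋂_{u ∈ ω} {y : ⟨y,u⟩ ≤ -f(u)}`. -/
def wulffShape {n : ℕ} (C ω : Set (En n)) (f : En n → ℝ) : Set (En n) :=
  C ∩ ⋂ u ∈ ω, {y | ⟪y, u⟫ ≤ -f u}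

/-- `K ∈ 𝒦(C,ω)`: `K` is a `C`-pseudo-cone that is `C`-determined by `ω`. -/
def InKClass {n : ℕ} (C ω K : Set (En n)) : Prop :=
  IsCPseudoCone C K ∧ K = C ∩ ⋂ u ∈ ω, {y | ⟪y, u⟫ ≤ suppFn K u}

end

/-! For `x ∈ K`, `y ∈ L` and `u ∈ ω` we have `⟪x, u⟫ ≤ h_K(u) ≤ 0` and `⟪y, u⟫ ≤ h_L(u) ≤ 0`, and
since `p ≤ 1` the `p`-mean of `-h_K(u)` and `-h_L(u)` is at most their arithmetic mean; hence
`(1 - t) • K + t • L` lies in the Wulff shape `W` of the `p`-mean. The Gaussian density is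
log-concave, so the Prékopa–Leindler inequality applied to its restrictions to `K`, `L` and `W`
gives `γ(K) ^ (1 - t) * γ(L) ^ t ≤ γ(W)`, and `γ(K)`, `γ(L)` are positive because `K` and `L`
contain translates of `int C`.

Prékopa–Leindler is proved on the line by integrating the one-dimensional Brunn–Minkowski
inequality over superlevel sets (layer cake), after normalising both functions to essential
supremum `1`; it passes to `ℝⁿ` by Fubini, applying the inequality to the fibres. -/

/-! ### Brunn–Minkowski and Prékopa–Leindler on the line -/

theorem Real.volume_add_volume_le_volume_add {A B : Set ℝ} (hA : IsCompact A) (hB : IsCompact B)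
    (hA₀ : A.Nonempty) (hB₀ : B.Nonempty) : volume A + volume B ≤ volume (A + B) := by
  set a := sSup A
  set b := sInf B
  have ha : a ∈ A := hA.sSup_mem hA₀
  have hb : b ∈ B := hB.sInf_mem hB₀
  -- `A + b` and `a + B` lie in `A + B` and meet only at `a + b`.
  have hinter : (A + {b}) ∩ ({a} + B) ⊆ {a + b} := by
    simp only [add_singleton, singleton_add, image_add_right, image_add_left]
    rintro z ⟨hzA, hzB⟩
    have := le_csSup hA.bddAbove hzA
    have := csInf_le hB.bddBelow hzB
    simp only [mem_singleton_iff]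
    linarith
  have hunion : (A + {b}) ∪ ({a} + B) ⊆ A + B :=
    union_subset (add_subset_add_left (singleton_subset_iff.2 hb))
      (add_subset_add_right (singleton_subset_iff.2 ha))
  calc volume A + volume B = volume (A + {b}) + volume ({a} + B) := by
        simp only [add_singleton, singleton_add, image_add_right, image_add_left,
          measure_preimage_add_right, measure_preimage_add]
    _ = volume ((A + {b}) ∪ ({a} + B)) + volume ((A + {b}) ∩ ({a} + B)) :=
        (measure_union_add_inter _ (isCompact_singleton.add hB).measurableSet).symm
    _ ≤ volume (A + B) + volume {a + b} := add_le_add (measure_mono hunion) (measure_mono hinter)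
    _ = volume (A + B) := by rw [Real.volume_singleton, add_zero]

theorem Real.ofReal_mul_volume_add_le_volume {A B H : Set ℝ} (hA : MeasurableSet A)
    (hB : MeasurableSet B) (hA₀ : A.Nonempty) (hB₀ : B.Nonempty) {a b : ℝ} (ha : 0 ≤ a)
    (hb : 0 ≤ b) (hH : ∀ x ∈ A, ∀ y ∈ B, a * x + b * y ∈ H) :
    ENNReal.ofReal a * volume A + ENNReal.ofReal b * volume B ≤ volume H := by
  obtain ⟨x₀, hx₀⟩ := hA₀
  obtain ⟨y₀, hy₀⟩ := hB₀
  simp only [hA.measure_eq_iSup_isCompact, hB.measure_eq_iSup_isCompact, ENNReal.mul_iSup,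
    iSup_and']
  refine ENNReal.biSup_add_biSup_le' ⟨∅, empty_subset _, isCompact_empty⟩
    ⟨∅, empty_subset _, isCompact_empty⟩ fun K ⟨hKA, hK⟩ K' ⟨hK'B, hK'⟩ => ?_
  have hsmul (c : ℝ) (hc : 0 ≤ c) (S : Set ℝ) :
      volume (c • S) = ENNReal.ofReal c * volume S := by
    simp [Measure.addHaar_smul, abs_of_nonneg hc]
  -- Adding a point of `A` (resp. `B`) makes the compact sets nonempty.
  have hsub : a • insert x₀ K + b • insert y₀ K' ⊆ H := by
    rintro _ ⟨_, ⟨x, hx, rfl⟩, _, ⟨y, hy, rfl⟩, rfl⟩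
    exact hH x (insert_subset hx₀ hKA hx) y (insert_subset hy₀ hK'B hy)
  calc ENNReal.ofReal a * volume K + ENNReal.ofReal b * volume K'
      ≤ volume (a • insert x₀ K) + volume (b • insert y₀ K') := by
        rw [hsmul a ha, hsmul b hb]
        gcongr <;> exact subset_insert _ _
    _ ≤ volume (a • insert x₀ K + b • insert y₀ K') :=
        Real.volume_add_volume_le_volume_add ((hK.insert x₀).smul a) ((hK'.insert y₀).smul b)
          (insert_nonempty _ _).smul_set (insert_nonempty _ _).smul_set
    _ ≤ volume H := measure_mono hsub

theorem Real.volume_setOf_ofReal_lt_inter_Ioi (a : ℝ≥0∞) :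
    volume ({s : ℝ | ENNReal.ofReal s < a} ∩ Ioi 0) = a := by
  rcases eq_or_ne a ∞ with rfl | ha
  · simp
  · have : {s : ℝ | ENNReal.ofReal s < a} ∩ Ioi 0 = Ioo 0 a.toReal := by
      ext s
      simp only [mem_inter_iff, mem_ofPred_eq, mem_Ioi, mem_Ioo, and_comm (a := _ < a),
        and_congr_right_iff]
      exact fun (hs : 0 < s) => ENNReal.ofReal_lt_iff_lt_toReal hs.le ha
    rw [this, Real.volume_Ioo, sub_zero, ENNReal.ofReal_toReal ha]

theorem lintegral_eq_lintegral_meas_ofReal_lt {α : Type*} [MeasurableSpace α] (μ : Measure α)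
    [SFinite μ] {F : α → ℝ≥0∞} (hF : Measurable F) :
    ∫⁻ x, F x ∂μ = ∫⁻ s in Ioi 0, μ {x | ENNReal.ofReal s < F x} := by
  have hmeas : Measurable (Function.uncurry fun x (s : ℝ) =>
      {s | ENNReal.ofReal s < F x}.indicator (1 : ℝ → ℝ≥0∞) s) :=
    measurable_const.indicator (measurableSet_lt (ENNReal.measurable_ofReal.comp measurable_snd)
      (hF.comp measurable_fst))
  calc ∫⁻ x, F x ∂μ
      = ∫⁻ x, (∫⁻ s in Ioi (0 : ℝ), {s | ENNReal.ofReal s < F x}.indicator 1 s) ∂μ := by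
        congr 1 with x
        rw [lintegral_indicator_one (measurableSet_lt ENNReal.measurable_ofReal measurable_const),
          Measure.restrict_apply' measurableSet_Ioi, Real.volume_setOf_ofReal_lt_inter_Ioi]
    _ = ∫⁻ s in Ioi 0, ∫⁻ x, {s | ENNReal.ofReal s < F x}.indicator 1 s ∂μ :=
        lintegral_lintegral_swap hmeas.aemeasurable
    _ = ∫⁻ s in Ioi 0, μ {x | ENNReal.ofReal s < F x} := by
        congr 1 with s
        rw [← lintegral_indicator_one (measurableSet_lt measurable_const hF)]
        rfl

theorem ENNReal.rpow_mul_rpow_le_add (a b : ℝ≥0∞) {t : ℝ} (ht₀ : 0 < t) (ht₁ : t < 1) :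
    a ^ (1 - t) * b ^ t ≤ ENNReal.ofReal (1 - t) * a + ENNReal.ofReal t * b := by
  have ht : 0 < 1 - t := sub_pos.2 ht₁
  have hpq : (1 - t)⁻¹.HolderConjugate t⁻¹ :=
    Real.holderConjugate_iff.2 ⟨one_lt_inv₀ ht |>.2 (by linarith), by simp⟩
  convert ENNReal.young_inequality (a ^ (1 - t)) (b ^ t) hpq using 2 <;>
    rw [← ENNReal.rpow_mul, mul_inv_cancel₀ (by positivity), ENNReal.rpow_one, div_eq_mul_inv,
      ENNReal.ofReal_inv_of_pos (by positivity), inv_inv, mul_comm]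

theorem ENNReal.lt_rpow_mul_rpow {a b c : ℝ≥0∞} (ha : c < a) (hb : c < b) {t : ℝ} (ht₀ : 0 < t)
    (ht₁ : t < 1) : c < a ^ (1 - t) * b ^ t :=
  calc c = c ^ (1 - t) * c ^ t := by
        rw [← ENNReal.rpow_add_of_nonneg _ _ (by linarith) ht₀.le, sub_add_cancel,
          ENNReal.rpow_one]
    _ < a ^ (1 - t) * b ^ t :=
        ENNReal.mul_lt_mul (ENNReal.rpow_lt_rpow ha (by linarith)) (ENNReal.rpow_lt_rpow hb ht₀)

theorem measure_lt_ne_zero_of_lt_essSup {α β : Type*} [MeasurableSpace α] [CompleteLinearOrder β]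
    {μ : Measure α} {f : α → β} {c : β} (hc : c < essSup f μ) : μ {x | c < f x} ≠ 0 := by
  intro h
  refine hc.not_ge (essSup_le_of_ae_le c (ae_iff.2 ?_))
  simpa only [not_le] using h

theorem Real.prekopaLeindler_additive {f g h : ℝ → ℝ≥0∞} (hf : Measurable f)
    (hg : Measurable g) (hh : Measurable h) {t : ℝ} (ht₀ : 0 < t) (ht₁ : t < 1)
    (hfg : essSup f volume = essSup g volume)
    (hfgh : ∀ x y, f x ^ (1 - t) * g y ^ t ≤ h ((1 - t) * x + t * y)) :
    ENNReal.ofReal (1 - t) * (∫⁻ x, f x) + ENNReal.ofReal t * (∫⁻ x, g x) ≤ ∫⁻ x, h x := by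
  have hmono (φ : ℝ → ℝ≥0∞) : Antitone fun s : ℝ => volume {x | ENNReal.ofReal s < φ x} :=
    fun _ _ hs => measure_mono fun _ hx => (ENNReal.ofReal_le_ofReal hs).trans_lt hx
  -- Superlevel sets of `f` and `g` at the same height are both nonempty or both null.
  have hlevel (s : ℝ) : ENNReal.ofReal (1 - t) * volume {x | ENNReal.ofReal s < f x}
      + ENNReal.ofReal t * volume {x | ENNReal.ofReal s < g x}
      ≤ volume {x | ENNReal.ofReal s < h x} := by
    by_cases hs : ENNReal.ofReal s < essSup f volume
    · refine Real.ofReal_mul_volume_add_le_volume (measurableSet_lt measurable_const hf)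
        (measurableSet_lt measurable_const hg)
        (nonempty_of_measure_ne_zero (measure_lt_ne_zero_of_lt_essSup hs))
        (nonempty_of_measure_ne_zero (measure_lt_ne_zero_of_lt_essSup (hfg ▸ hs)))
        (by linarith) ht₀.le fun x hx y hy => ?_
      exact (ENNReal.lt_rpow_mul_rpow hx hy ht₀ ht₁).trans_le (hfgh x y)
    · have hnull (φ : ℝ → ℝ≥0∞) (hφ : ¬ENNReal.ofReal s < essSup φ volume) :
          volume {x | ENNReal.ofReal s < φ x} = 0 :=
        measure_mono_null (fun _ hx => (not_lt.1 hφ).trans_lt hx) (meas_essSup_lt (f := φ))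
      rw [hnull f hs, hnull g (hfg ▸ hs)]
      simp
  calc ENNReal.ofReal (1 - t) * (∫⁻ x, f x) + ENNReal.ofReal t * (∫⁻ x, g x)
      = ∫⁻ s in Ioi 0, (ENNReal.ofReal (1 - t) * volume {x | ENNReal.ofReal s < f x}
          + ENNReal.ofReal t * volume {x | ENNReal.ofReal s < g x}) := by
        rw [lintegral_add_left ((hmono f).measurable.const_mul _), lintegral_const_mul _
          (hmono f).measurable, lintegral_const_mul _ (hmono g).measurable,
          lintegral_eq_lintegral_meas_ofReal_lt volume hf,
          lintegral_eq_lintegral_meas_ofReal_lt volume hg]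
    _ ≤ ∫⁻ s in Ioi 0, volume {x | ENNReal.ofReal s < h x} := lintegral_mono hlevel
    _ = ∫⁻ x, h x := (lintegral_eq_lintegral_meas_ofReal_lt volume hh).symm

theorem Real.prekopaLeindler_of_essSup_ne_top {f g h : ℝ → ℝ≥0∞} (hf : Measurable f)
    (hg : Measurable g) (hh : Measurable h) {t : ℝ} (ht₀ : 0 < t) (ht₁ : t < 1)
    (hf_top : essSup f volume ≠ ∞) (hg_top : essSup g volume ≠ ∞)
    (hfgh : ∀ x y, f x ^ (1 - t) * g y ^ t ≤ h ((1 - t) * x + t * y)) :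
    (∫⁻ x, f x) ^ (1 - t) * (∫⁻ x, g x) ^ t ≤ ∫⁻ x, h x := by
  have ht : 0 < 1 - t := sub_pos.2 ht₁
  set Mf := essSup f volume
  set Mg := essSup g volume
  rcases eq_or_ne Mf 0 with hMf | hMf
  · simp [lintegral_eq_zero_of_ae_eq_zero (ENNReal.essSup_eq_zero_iff.1 hMf),
      ENNReal.zero_rpow_of_pos ht]
  rcases eq_or_ne Mg 0 with hMg | hMg
  · simp [lintegral_eq_zero_of_ae_eq_zero (ENNReal.essSup_eq_zero_iff.1 hMg),
      ENNReal.zero_rpow_of_pos ht₀]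
  set M := Mf ^ (1 - t) * Mg ^ t
  have hM : M ≠ 0 := by positivity
  have hM_top : M ≠ ∞ := by finiteness
  have hscale (a b : ℝ≥0∞) :
      (Mf⁻¹ * a) ^ (1 - t) * (Mg⁻¹ * b) ^ t = M⁻¹ * (a ^ (1 - t) * b ^ t) := by
    rw [ENNReal.mul_rpow_of_nonneg _ _ ht.le, ENNReal.mul_rpow_of_nonneg _ _ ht₀.le,
      ENNReal.inv_rpow, ENNReal.inv_rpow,
      ENNReal.mul_inv (.inl (by positivity)) (.inl (by finiteness))]
    ring
  have hadd := Real.prekopaLeindler_additive (f := fun x => Mf⁻¹ * f x)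
    (g := fun y => Mg⁻¹ * g y) (h := fun z => M⁻¹ * h z) (hf.const_mul _) (hg.const_mul _)
    (hh.const_mul _) ht₀ ht₁
    (by rw [ENNReal.essSup_const_mul, ENNReal.essSup_const_mul,
      ENNReal.inv_mul_cancel hMf hf_top, ENNReal.inv_mul_cancel hMg hg_top])
    (fun x y => (hscale _ _).trans_le (by gcongr; exact hfgh x y))
  rw [lintegral_const_mul _ hf, lintegral_const_mul _ hg, lintegral_const_mul _ hh] at hadd
  calc (∫⁻ x, f x) ^ (1 - t) * (∫⁻ x, g x) ^ t
      = M * ((Mf⁻¹ * ∫⁻ x, f x) ^ (1 - t) * (Mg⁻¹ * ∫⁻ x, g x) ^ t) := by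
        rw [hscale, ENNReal.mul_inv_cancel_left hM hM_top]
    _ ≤ M * (M⁻¹ * ∫⁻ x, h x) := by
        gcongr M * ?_
        exact (ENNReal.rpow_mul_rpow_le_add _ _ ht₀ ht₁).trans
          (by simpa only [mul_assoc] using hadd)
    _ = ∫⁻ x, h x := ENNReal.mul_inv_cancel_left hM hM_top

/-! ### Prékopa–Leindler in `ℝⁿ` -/

def HasPrekopaLeindler {E : Type*} [AddCommGroup E] [Module ℝ E] [MeasurableSpace E]
    (μ : Measure E) : Prop :=
  ∀ ⦃f g h : E → ℝ≥0∞⦄, Measurable f → Measurable g → Measurable h → ∀ ⦃t : ℝ⦄, 0 < t → t < 1 →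
    (∀ x y, f x ^ (1 - t) * g y ^ t ≤ h ((1 - t) • x + t • y)) →
    (∫⁻ x, f x ∂μ) ^ (1 - t) * (∫⁻ x, g x ∂μ) ^ t ≤ ∫⁻ x, h x ∂μ

theorem Real.hasPrekopaLeindler_volume : HasPrekopaLeindler (volume : Measure ℝ) := by
  intro f g h hf hg hh t ht₀ ht₁ hfgh
  have htrunc (φ : ℝ → ℝ≥0∞) (hφ : Measurable φ) :
      ∫⁻ x, φ x = ⨆ n : ℕ, ∫⁻ x, min (φ x) n := by
    rw [← lintegral_iSup (fun n => hφ.min measurable_const)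
      fun m n hmn x => min_le_min_left _ (Nat.cast_le.2 hmn)]
    simp only [← inf_iSup_eq, ENNReal.iSup_natCast, min_top_right]
  have hbound (n : ℕ) :
      (∫⁻ x, min (f x) n) ^ (1 - t) * (∫⁻ x, min (g x) n) ^ t ≤ ∫⁻ x, h x :=
    Real.prekopaLeindler_of_essSup_ne_top (hf.min measurable_const) (hg.min measurable_const) hh
      ht₀ ht₁ (ne_top_of_le_ne_top (ENNReal.natCast_ne_top n) (essSup_le_of_ae_le _
        (.of_forall fun _ => min_le_right _ _)))
      (ne_top_of_le_ne_top (ENNReal.natCast_ne_top n) (essSup_le_of_ae_le _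
        (.of_forall fun _ => min_le_right _ _)))
      fun x y => (hfgh x y).trans' (by gcongr <;> exact min_le_left _ _)
  rw [htrunc f hf, htrunc g hg, ← ENNReal.orderIsoRpow_apply _ (sub_pos.2 ht₁),
    ← ENNReal.orderIsoRpow_apply _ ht₀, OrderIso.map_iSup, OrderIso.map_iSup, ENNReal.iSup_mul]
  refine iSup_le fun m => ?_
  rw [ENNReal.mul_iSup]
  refine iSup_le fun n => ?_
  simp only [ENNReal.orderIsoRpow_apply]
  exact (hbound (max m n)).trans' (by gcongr <;> simp)

namespace HasPrekopaLeindler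

variable {E F : Type*} [AddCommGroup E] [Module ℝ E] [MeasurableSpace E] [AddCommGroup F]
  [Module ℝ F] [MeasurableSpace F] {μ : Measure E} {ν : Measure F}

theorem prod [SFinite μ] [SFinite ν] (hμ : HasPrekopaLeindler μ) (hν : HasPrekopaLeindler ν) :
    HasPrekopaLeindler (μ.prod ν) := by
  intro f g h hf hg hh t ht₀ ht₁ hfgh
  rw [lintegral_prod _ hf.aemeasurable, lintegral_prod _ hg.aemeasurable,
    lintegral_prod _ hh.aemeasurable]
  -- Prékopa–Leindler on the fibres makes the marginals satisfy the hypothesis on `E`.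
  refine hμ hf.lintegral_prod_right' hg.lintegral_prod_right' hh.lintegral_prod_right' ht₀ ht₁
    fun x y => hν (hf.comp measurable_prodMk_left) (hg.comp measurable_prodMk_left)
      (hh.comp measurable_prodMk_left) ht₀ ht₁ fun v w => hfgh (x, v) (y, w)

theorem map (hμ : HasPrekopaLeindler μ) (e : E →ₗ[ℝ] F) (he : MeasurePreserving e μ ν) :
    HasPrekopaLeindler ν := by
  intro f g h hf hg hh t ht₀ ht₁ hfgh
  rw [← he.lintegral_comp hf, ← he.lintegral_comp hg, ← he.lintegral_comp hh]
  exact hμ (hf.comp he.measurable) (hg.comp he.measurable) (hh.comp he.measurable) ht₀ ht₁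
    fun x y => by simpa using hfgh (e x) (e y)

end HasPrekopaLeindler

theorem hasPrekopaLeindler_volume_pi : ∀ n : ℕ, HasPrekopaLeindler (volume : Measure (Fin n → ℝ))
  | 0 => by
    intro f g h _ _ _ t _ _ hfgh
    rw [MeasureTheory.Measure.volume_pi_eq_dirac 0]
    simpa [Subsingleton.elim ((1 - t) • (0 : Fin 0 → ℝ) + t • 0) 0] using hfgh 0 0
  | n + 1 => by
    refine (Real.hasPrekopaLeindler_volume.prod (hasPrekopaLeindler_volume_pi n)).map
      (Fin.consLinearEquiv ℝ fun _ => ℝ).toLinearMap ?_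
    have hcons : MeasurePreserving (Fin.consEquiv fun _ : Fin (n + 1) => ℝ) := by
      simpa using (volume_preserving_piFinSuccAbove (fun _ : Fin (n + 1) => ℝ) 0).symm
    exact hcons

theorem EuclideanSpace.hasPrekopaLeindler_volume (n : ℕ) :
    HasPrekopaLeindler (volume : Measure (EuclideanSpace ℝ (Fin n))) :=
  (hasPrekopaLeindler_volume_pi n).map (WithLp.linearEquiv 2 ℝ (Fin n → ℝ)).symm.toLinearMap
    (PiLp.volume_preserving_toLp _)

/-! ### Gaussian measure -/

theorem integrable_exp_neg_sq_norm_div_two {V : Type*} [NormedAddCommGroup V]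
    [InnerProductSpace ℝ V] [FiniteDimensional ℝ V] [MeasurableSpace V] [BorelSpace V] :
    Integrable fun x : V => Real.exp (-‖x‖ ^ 2 / 2) := by
  have h := GaussianFourier.integral_rexp_neg_mul_sq_norm (V := V) (b := 1 / 2) (by norm_num)
  simp_rw [neg_mul, one_div_mul_eq_div, ← neg_div] at h
  exact .of_integral_ne_zero (h ▸ by positivity)

theorem exp_neg_sq_norm_div_two_rpow_mul_rpow_le {E : Type*} [SeminormedAddCommGroup E]
    [NormedSpace ℝ E] (x y : E) {t : ℝ} (ht₀ : 0 ≤ t) (ht₁ : t ≤ 1) :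
    ENNReal.ofReal (Real.exp (-‖x‖ ^ 2 / 2)) ^ (1 - t) *
        ENNReal.ofReal (Real.exp (-‖y‖ ^ 2 / 2)) ^ t ≤
      ENNReal.ofReal (Real.exp (-‖(1 - t) • x + t • y‖ ^ 2 / 2)) := by
  have hconv := (convexOn_univ_norm.pow (fun _ _ => norm_nonneg _) 2).2 (mem_univ x) (mem_univ y)
    (sub_nonneg.2 ht₁) ht₀ (sub_add_cancel 1 t)
  simp only [Pi.pow_apply, smul_eq_mul] at hconv
  rw [ENNReal.ofReal_rpow_of_pos (Real.exp_pos _), ENNReal.ofReal_rpow_of_pos (Real.exp_pos _),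
    ← ENNReal.ofReal_mul (by positivity), ← Real.exp_mul, ← Real.exp_mul, ← Real.exp_add]
  gcongr
  linarith

section Gaussian

variable {n : ℕ}

theorem gaussianMeasure_mono {A B : Set (En n)} (hAB : A ⊆ B) :
    gaussianMeasure n A ≤ gaussianMeasure n B := by
  refine mul_le_mul_of_nonneg_left ?_ (by positivity)
  exact setIntegral_mono_set integrable_exp_neg_sq_norm_div_two.integrableOn
    (.of_forall fun _ => (Real.exp_pos _).le) (.of_forall hAB)

theorem gaussianMeasure_pos {A U : Set (En n)} (hU : IsOpen U) (hU₀ : U.Nonempty) (hUA : U ⊆ A) :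
    0 < gaussianMeasure n A := by
  refine (mul_pos (by positivity) ?_).trans_le (gaussianMeasure_mono hUA)
  rw [setIntegral_pos_iff_support_of_nonneg_ae (.of_forall fun _ => (Real.exp_pos _).le)
    integrable_exp_neg_sq_norm_div_two.integrableOn,
    Function.support_eq_univ fun _ => (Real.exp_pos _).ne', univ_inter]
  exact hU.measure_pos _ hU₀

theorem gaussianMeasure_eq_toReal_lintegral (A : Set (En n)) :
    gaussianMeasure n A = (2 * Real.pi) ^ (-(n : ℝ) / 2) *
      (∫⁻ x in A, ENNReal.ofReal (Real.exp (-‖x‖ ^ 2 / 2))).toReal := by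
  rw [gaussianMeasure, integral_eq_lintegral_of_nonneg_ae (.of_forall fun _ => (Real.exp_pos _).le)
    (by fun_prop)]

theorem gaussianMeasure_rpow_mul_rpow_le {A B W : Set (En n)} (hA : MeasurableSet A)
    (hB : MeasurableSet B) (hW : MeasurableSet W) (hA₀ : A.Nonempty) (hB₀ : B.Nonempty) {t : ℝ}
    (ht₀ : 0 ≤ t) (ht₁ : t ≤ 1) (hABW : ∀ x ∈ A, ∀ y ∈ B, (1 - t) • x + t • y ∈ W) :
    gaussianMeasure n A ^ (1 - t) * gaussianMeasure n B ^ t ≤ gaussianMeasure n W := by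
  obtain ⟨x₀, hx₀⟩ := hA₀
  obtain ⟨y₀, hy₀⟩ := hB₀
  rcases ht₀.eq_or_lt with rfl | ht₀
  · simpa using gaussianMeasure_mono fun x hx => by simpa using hABW x hx y₀ hy₀
  rcases ht₁.eq_or_lt with rfl | ht₁
  · simpa using gaussianMeasure_mono fun y hy => by simpa using hABW x₀ hx₀ y hy
  set φ : En n → ℝ≥0∞ := fun x => ENNReal.ofReal (Real.exp (-‖x‖ ^ 2 / 2))
  have hφ : Measurable φ := by fun_prop
  have hPL := EuclideanSpace.hasPrekopaLeindler_volume n (hφ.indicator hA) (hφ.indicator hB)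
    (hφ.indicator hW) ht₀ ht₁ fun x y => by
      by_cases hx : x ∈ A
      · by_cases hy : y ∈ B
        · simpa [hx, hy, hABW x hx y hy, φ] using
            exp_neg_sq_norm_div_two_rpow_mul_rpow_le x y ht₀.le ht₁.le
        · simp [hy, ENNReal.zero_rpow_of_pos ht₀]
      · simp [hx, ENNReal.zero_rpow_of_pos (sub_pos.2 ht₁)]
  rw [lintegral_indicator hA, lintegral_indicator hB, lintegral_indicator hW] at hPL
  have hc : 0 < (2 * Real.pi) ^ (-(n : ℝ) / 2) := by positivity
  simp only [gaussianMeasure_eq_toReal_lintegral]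
  calc _ = (2 * Real.pi) ^ (-(n : ℝ) / 2) *
        ((∫⁻ x in A, φ x) ^ (1 - t) * (∫⁻ x in B, φ x) ^ t).toReal := by
        rw [Real.mul_rpow hc.le ENNReal.toReal_nonneg, Real.mul_rpow hc.le ENNReal.toReal_nonneg,
          ENNReal.toReal_mul, ENNReal.toReal_rpow, ENNReal.toReal_rpow, mul_mul_mul_comm,
          ← Real.rpow_add hc, sub_add_cancel, Real.rpow_one]
    _ ≤ _ := mul_le_mul_of_nonneg_left (ENNReal.toReal_mono
          integrable_exp_neg_sq_norm_div_two.integrableOn.lintegral_lt_top.ne hPL) hc.le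

end Gaussian

/-! ### Pseudo-cones and Wulff shapes of `p`-means -/

theorem Real.rpow_mean_le_arith_mean2 {a b t p : ℝ} (ha : 0 ≤ a) (hb : 0 ≤ b) (ht₀ : 0 ≤ t)
    (ht₁ : t ≤ 1) (hp₀ : 0 < p) (hp₁ : p ≤ 1) :
    ((1 - t) * a ^ p + t * b ^ p) ^ (1 / p) ≤ (1 - t) * a + t * b := by
  have hconc := (Real.concaveOn_rpow hp₀.le hp₁).2 ha hb (sub_nonneg.2 ht₁) ht₀ (sub_add_cancel 1 t)
  simp only [smul_eq_mul] at hconc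
  calc _ ≤ (((1 - t) * a + t * b) ^ p) ^ (1 / p) :=
        Real.rpow_le_rpow (by positivity) hconc (by positivity)
    _ = _ := by rw [← Real.rpow_mul (by positivity), mul_one_div_cancel hp₀.ne', Real.rpow_one]

section Cones

variable {n : ℕ} {C ω K : Set (En n)}

theorem suppFn_nonpos {u : En n} (hK : K.Nonempty) (hKC : K ⊆ C) (hu : u ∈ polarCone C) :
    suppFn K u ≤ 0 :=
  csSup_le (hK.image _) <| forall_mem_image.2 fun x hx => real_inner_comm x u ▸ hu x (hKC hx)

theorem isClosed_wulffShape (hC : IsClosed C) (f : En n → ℝ) : IsClosed (wulffShape C ω f) :=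
  hC.inter <| isClosed_biInter fun _ _ => isClosed_le (by fun_prop) continuous_const

theorem IsCPseudoCone.add_mem (hK : IsCPseudoCone C K) {x c : En n} (hx : x ∈ K) (hc : c ∈ C) :
    x + c ∈ K :=
  (hK.2 ▸ hc : c ∈ recessionCone K) x hx

theorem IsCPseudoCone.gaussianMeasure_pos (hK : IsCPseudoCone C K) (hC : (interior C).Nonempty) :
    0 < gaussianMeasure n K := by
  obtain ⟨x, hx⟩ := hK.1.1
  obtain ⟨c, hc⟩ := hC
  exact _root_.gaussianMeasure_pos (isOpen_interior.preimage (continuous_sub_right x))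
    ⟨x + c, by simpa using hc⟩ fun y hy => by simpa using hK.add_mem hx (interior_subset hy)

theorem InKClass.subset (hK : InKClass C ω K) : K ⊆ C :=
  hK.2 ▸ inter_subset_left

theorem InKClass.inner_le_suppFn (hK : InKClass C ω K) {x u : En n} (hx : x ∈ K) (hu : u ∈ ω) :
    ⟪x, u⟫ ≤ suppFn K u :=
  mem_iInter₂.1 (hK.2 ▸ hx : x ∈ C ∩ _).2 u hu

theorem InKClass.smul_add_smul_mem_wulffShape {L : Set (En n)} (hC : Convex ℝ C)
    (hω : ω ⊆ polarCone C) (hK : InKClass C ω K) (hL : InKClass C ω L) {p t : ℝ} (hp₀ : 0 < p)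
    (hp₁ : p ≤ 1) (ht₀ : 0 ≤ t) (ht₁ : t ≤ 1) {x y : En n} (hx : x ∈ K) (hy : y ∈ L) :
    (1 - t) • x + t • y ∈
      wulffShape C ω fun u => ((1 - t) * (-suppFn K u) ^ p + t * (-suppFn L u) ^ p) ^ (1 / p) := by
  refine ⟨hC (hK.subset hx) (hL.subset hy) (sub_nonneg.2 ht₁) ht₀ (sub_add_cancel 1 t),
    mem_iInter₂.2 fun u hu => ?_⟩
  have hmean := Real.rpow_mean_le_arith_mean2
    (neg_nonneg.2 (suppFn_nonpos ⟨x, hx⟩ hK.subset (hω hu)))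
    (neg_nonneg.2 (suppFn_nonpos ⟨y, hy⟩ hL.subset (hω hu))) ht₀ ht₁ hp₀ hp₁
  have hxu := hK.inner_le_suppFn hx hu
  have hyu := hL.inner_le_suppFn hy hu
  simp only [mem_ofPred_eq, inner_add_left, real_inner_smul_left]
  nlinarith

end Cones

theorem log_gaussian_wulff_p_mean_ge_general {n : ℕ} (C : Set (En n))
    (hC : IsPointedCone C) (ω : Set (En n))
    (hωΩ : ω ⊆ OmegaSet C) (K L : Set (En n)) (hK : InKClass C ω K) (hL : InKClass C ω L)
    (p : ℝ) (hp0 : 0 < p) (hp1 : p ≤ 1) (t : ℝ) (ht0 : 0 ≤ t) (ht1 : t ≤ 1) :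
    Real.log (gaussianMeasure n (C ∩ ⋂ u ∈ ω, {y : En n | ⟪y, u⟫ ≤
        -(((1 - t) * (-suppFn K u) ^ p + t * (-suppFn L u) ^ p) ^ (1 / p))})) ≥
      (1 - t) * Real.log (gaussianMeasure n K) + t * Real.log (gaussianMeasure n L) := by
  obtain ⟨hC_closed, hC_convex, -, hC_int, -⟩ := hC
  have hK_closed : IsClosed K := hK.1.1.2.1
  have hL_closed : IsClosed L := hL.1.1.2.1
  have hγK := hK.1.gaussianMeasure_pos hC_int
  have hγL := hL.1.gaussianMeasure_pos hC_int
  have hmain := gaussianMeasure_rpow_mul_rpow_le hK_closed.measurableSet hL_closed.measurableSet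
    (isClosed_wulffShape hC_closed _).measurableSet hK.1.1.1 hL.1.1.1 ht0 ht1 fun x hx y hy =>
      hK.smul_add_smul_mem_wulffShape hC_convex (fun u hu => interior_subset (hωΩ hu).2) hL
        hp0 hp1 ht0 ht1 hx hy
  have hlog := Real.log_le_log (by positivity) hmain
  rwa [Real.log_mul (by positivity) (by positivity), Real.log_rpow hγK, Real.log_rpow hγL] at hlog

/-- For `K, L ∈ 𝒦(C,ω)`, `p ∈ (0,1]` and `t ∈ [0,1]`, the Gaussian measure of the Wulff
shape of the `p`-mean `((1-t)ĥ_K^p + tĥ_L^p)^{1/p}` satisfies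
`log γⁿ(·) ≥ (1-t) log γⁿ(K) + t log γⁿ(L)`. -/
theorem log_gaussian_wulff_p_mean_ge {n : ℕ} (hn : 1 ≤ n) (C : Set (En n))
    (hC : IsPointedCone C) (ω : Set (En n)) (hω : ω.Nonempty) (hωc : IsCompact ω)
    (hωΩ : ω ⊆ OmegaSet C) (K L : Set (En n)) (hK : InKClass C ω K) (hL : InKClass C ω L)
    (p : ℝ) (hp0 : 0 < p) (hp1 : p ≤ 1) (t : ℝ) (ht0 : 0 ≤ t) (ht1 : t ≤ 1) :
    Real.log (gaussianMeasure n (C ∩ ⋂ u ∈ ω, {y : En n | ⟪y, u⟫ ≤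
        -(((1 - t) * (-suppFn K u) ^ p + t * (-suppFn L u) ^ p) ^ (1 / p))})) ≥
      (1 - t) * Real.log (gaussianMeasure n K) + t * Real.log (gaussianMeasure n L) :=
  log_gaussian_wulff_p_mean_ge_general C hC ω hωΩ K L hK hL p hp0 hp1 t ht0 ht1
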